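/- Let Y and Z be separated topological vector spaces, let (A_i)_{i∈I} be a family of continuous linear maps from Y to Z, and let G ⊂ Y be a convex compact set. Suppose that for each x ∈ G the orbit {A_i(x) : i ∈ I} is bounded in Z. Then the family is uniformly bounded on G: there exists a bounded set F ⊂ Z such that A_i(G) ⊂ F for all i ∈ I. -/

import Mathlib

open Bornology Filter Set Topology
open scoped Pointwise

/-! By Baire's theorem on the compact space `G`, the orbits are uniformly absorbed by a closed
balanced neighbourhood `W` of `0` on a relatively open piece `G ∩ U` around some `x₀ ∈ G`.
Since `G` is bounded, a homothety `z = x₀ + t • (x - x₀)` with small ratio `t > 0` maps `G` into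
`G ∩ U` (convexity keeps it in `G`), and `A x = t⁻¹ • A z + (1 - t⁻¹) • A x₀`, so the uniform
bound spreads from `G ∩ U` to all of `G`. -/

theorem Absorbs.smul_set {𝕜 E : Type*} [NontriviallyNormedField 𝕜] [AddCommGroup E] [Module 𝕜 E]
    {s t : Set E} (hs : Balanced 𝕜 s) (h : Absorbs 𝕜 s t) (a : 𝕜) : Absorbs 𝕜 s (a • t) := by
  obtain ⟨r, hr⟩ := absorbs_iff_norm.1 h
  obtain ⟨c, hc⟩ := NormedField.exists_lt_norm 𝕜 r
  refine absorbs_iff_norm.2 ⟨‖a * c‖, fun b hb => ?_⟩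
  calc a • t ⊆ a • c • s := smul_set_mono (hr c hc.le)
    _ = (a * c) • s := smul_smul a c s
    _ ⊆ b • s := hs.smul_mono hb

theorem exists_isClosed_balanced_add_self_subset (𝕜 : Type*) {E : Type*} [NontriviallyNormedField 𝕜]
    [AddCommGroup E] [Module 𝕜 E] [TopologicalSpace E] [IsTopologicalAddGroup E]
    [ContinuousSMul 𝕜 E] {V : Set E} (hV : V ∈ 𝓝 0) :
    ∃ W ∈ 𝓝 (0 : E), IsClosed W ∧ Balanced 𝕜 W ∧ W + W ⊆ V := by
  obtain ⟨V₂, hV₂, hV₂V⟩ := exists_nhds_zero_half hV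
  obtain ⟨W, ⟨hW, hWcl, hWbal⟩, hWV₂⟩ := (nhds_basis_closed_balanced 𝕜 E).mem_iff.1 hV₂
  refine ⟨W, hW, hWcl, hWbal, ?_⟩
  rintro - ⟨v, hv, w, hw, rfl⟩
  exact hV₂V v (hWV₂ hv) w (hWV₂ hw)

-- The closed sets on which the family is absorbed by `W` beyond a fixed rate cover `X`.
theorem exists_isOpen_absorbs_iUnion_image {𝕜 X E ι : Type*} [NormedField 𝕜]
    [TopologicalSpace X] [BaireSpace X] [Nonempty X]
    [AddCommGroup E] [Module 𝕜 E] [TopologicalSpace E] [ContinuousConstSMul 𝕜 E]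
    {f : ι → X → E} (hf : ∀ i, Continuous (f i)) {W : Set E} (hW : IsClosed W)
    (habs : ∀ x, Absorbs 𝕜 W (range (f · x))) :
    ∃ O : Set X, IsOpen O ∧ O.Nonempty ∧ Absorbs 𝕜 W (⋃ i, f i '' O) := by
  set e : ℕ → Set X := fun n => {x | ∀ i, ∀ a : 𝕜, (n : ℝ) < ‖a‖ → f i x ∈ a • W}
  have he_closed : ∀ n, IsClosed (e n) := fun n => by
    simp only [e, ofPred_forall]
    exact isClosed_iInter fun i => isClosed_iInter fun a => isClosed_iInter fun ha =>
      (hW.smul_of_ne_zero (norm_pos_iff.1 ((Nat.cast_nonneg n).trans_lt ha))).preimage (hf i)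
  have he_cover : ⋃ n, e n = univ := eq_univ_of_forall fun x => by
    obtain ⟨r, hr⟩ := absorbs_iff_norm.1 (habs x)
    obtain ⟨n, hn⟩ := exists_nat_ge r
    exact mem_iUnion.2 ⟨n, fun i a ha => hr a (hn.trans ha.le) (mem_range_self i)⟩
  obtain ⟨n, hn⟩ := nonempty_interior_of_iUnion_of_closed he_closed he_cover
  refine ⟨interior (e n), isOpen_interior, hn, absorbs_iff_norm.2 ⟨n + 1, fun a ha => ?_⟩⟩
  refine iUnion_subset fun i => image_subset_iff.2 fun x hx => interior_subset hx i a ?_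
  linarith

theorem IsCompact.exists_mem_nhds_absorbs_iUnion_image {𝕜 Y E ι : Type*} [NormedField 𝕜]
    [TopologicalSpace Y] [RegularSpace Y]
    [AddCommGroup E] [Module 𝕜 E] [TopologicalSpace E] [ContinuousConstSMul 𝕜 E]
    {G : Set Y} (hG : IsCompact G) (hGne : G.Nonempty)
    {f : ι → Y → E} (hf : ∀ i, Continuous (f i)) {W : Set E} (hW : IsClosed W)
    (habs : ∀ x ∈ G, Absorbs 𝕜 W (range (f · x))) :
    ∃ x₀ ∈ G, ∃ U ∈ 𝓝 x₀, Absorbs 𝕜 W (⋃ i, f i '' (G ∩ U)) := by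
  have : CompactSpace G := isCompact_iff_compactSpace.1 hG
  have : Nonempty G := hGne.to_subtype
  obtain ⟨O, hO, ⟨x₀, hx₀⟩, hOabs⟩ := exists_isOpen_absorbs_iUnion_image (𝕜 := 𝕜)
    (f := fun i => f i ∘ Subtype.val) (fun i => (hf i).comp continuous_subtype_val) hW
    (fun x => habs x.1 x.2)
  obtain ⟨U, hU, rfl⟩ := isOpen_induced_iff.1 hO
  refine ⟨x₀, x₀.2, U, hU.mem_nhds hx₀, ?_⟩
  simpa only [image_comp, Subtype.image_preimage_coe] using hOabs

theorem Bornology.IsVonNBounded.exists_add_smul_sub_mem {E : Type*} [AddCommGroup E]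
    [Module ℝ E] [TopologicalSpace E] [IsTopologicalAddGroup E] [ContinuousSMul ℝ E] {s U : Set E}
    (hs : IsVonNBounded ℝ s) {x₀ : E} (hU : U ∈ 𝓝 x₀) :
    ∃ t ∈ Ioc (0 : ℝ) 1, ∀ x ∈ s, x₀ + t • (x - x₀) ∈ U := by
  have hU₀ : (x₀ + ·) ⁻¹' U ∈ 𝓝 0 :=
    (continuous_const_add x₀).tendsto' 0 x₀ (add_zero x₀) hU
  have hsmall : ∀ᶠ t in 𝓝[>] (0 : ℝ), t • (s - {x₀}) ⊆ (x₀ + ·) ⁻¹' U :=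
    nhdsWithin_le_nhds <| ((hs.sub (isVonNBounded_singleton x₀)).tendsto_smallSets_nhds).eventually
      (eventually_smallSets_subset.2 hU₀)
  obtain ⟨t, hts, ht⟩ := (hsmall.and (Ioc_mem_nhdsGT one_pos)).exists
  exact ⟨t, ht, fun x hx => hts (smul_mem_smul_set (sub_mem_sub hx rfl))⟩

theorem map_eq_inv_smul_map_add_smul_sub {E F 𝓕 : Type*} [AddCommGroup E] [Module ℝ E]
    [AddCommGroup F] [Module ℝ F] [FunLike 𝓕 E F] [LinearMapClass 𝓕 ℝ E F] (f : 𝓕)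
    (x₀ x : E) {t : ℝ} (ht : t ≠ 0) :
    f x = t⁻¹ • f (x₀ + t • (x - x₀)) + (1 - t⁻¹) • f x₀ := by
  rw [map_add, map_smul, map_sub, smul_add, smul_smul, inv_mul_cancel₀ ht]
  module

theorem stmt5_general {Y Z : Type*}
    [AddCommGroup Y] [Module ℝ Y] [TopologicalSpace Y] [IsTopologicalAddGroup Y]
    [ContinuousSMul ℝ Y]
    [AddCommGroup Z] [Module ℝ Z] [TopologicalSpace Z] [IsTopologicalAddGroup Z]
    [ContinuousSMul ℝ Z]
    {I : Type*} (A : I → Y →L[ℝ] Z) (G : Set Y)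
    (hGconv : Convex ℝ G) (hGcomp : IsCompact G)
    (horb : ∀ x ∈ G, Bornology.IsVonNBounded ℝ {z : Z | ∃ i, A i x = z}) :
    ∃ F : Set Z, Bornology.IsVonNBounded ℝ F ∧ ∀ i, (A i) '' G ⊆ F := by
  refine ⟨⋃ i, A i '' G, fun V hV => ?_, subset_iUnion (fun i => A i '' G)⟩
  rcases G.eq_empty_or_nonempty with rfl | hGne
  · simp only [image_empty, iUnion_empty, Absorbs.empty]
  obtain ⟨W, hW, hWcl, hWbal, hWV⟩ := exists_isClosed_balanced_add_self_subset ℝ hV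
  obtain ⟨x₀, hx₀, U, hU, habs⟩ := hGcomp.exists_mem_nhds_absorbs_iUnion_image hGne
    (fun i => (A i).continuous) hWcl (fun x hx => horb x hx hW)
  obtain ⟨t, ⟨ht₀, ht₁⟩, htU⟩ := (hGcomp.isVonNBounded ℝ).exists_add_smul_sub_mem hU
  refine ((habs.smul_set hWbal t⁻¹).add (habs.smul_set hWbal (1 - t⁻¹))).mono hWV ?_
  refine iUnion_subset fun i => image_subset_iff.2 fun x hx => ?_
  rw [mem_preimage, map_eq_inv_smul_map_add_smul_sub (A i) x₀ x ht₀.ne']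
  refine add_mem_add (smul_mem_smul_set (mem_iUnion_of_mem i (mem_image_of_mem _ ?_)))
    (smul_mem_smul_set (mem_iUnion_of_mem i (mem_image_of_mem _ ⟨hx₀, mem_of_mem_nhds hU⟩)))
  exact ⟨hGconv.add_smul_sub_mem hx₀ hx ⟨ht₀.le, ht₁⟩, htU x hx⟩

theorem stmt5 {Y Z : Type*}
    [AddCommGroup Y] [Module ℝ Y] [TopologicalSpace Y] [IsTopologicalAddGroup Y]
    [ContinuousSMul ℝ Y] [T2Space Y]
    [AddCommGroup Z] [Module ℝ Z] [TopologicalSpace Z] [IsTopologicalAddGroup Z]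
    [ContinuousSMul ℝ Z] [T2Space Z]
    {I : Type*} (A : I → Y →L[ℝ] Z) (G : Set Y)
    (hGconv : Convex ℝ G) (hGcomp : IsCompact G)
    (horb : ∀ x ∈ G, Bornology.IsVonNBounded ℝ {z : Z | ∃ i, A i x = z}) :
    ∃ F : Set Z, Bornology.IsVonNBounded ℝ F ∧ ∀ i, (A i) '' G ⊆ F :=
  stmt5_general A G hGconv hGcomp horb
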